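/- Let p ≥ 4 be even and A a real matrix. The Schatten p-norm satisfies ‖A‖_{S_p}^p = Tr((A^T A)^{p/2}), and for matrices A, E, the second-order term in the expansion of ‖A+E‖_{S_p}^p is bounded by O(p²)·‖A‖_{S_∞}^{p−2}·‖E‖_F². In particular, Tr((A^T A)^{p/2−2} A^T E E^T A) ≤ ‖A‖_{S_∞}^{p−2} ‖E‖_F². -/

import Mathlib

/-!
Part one is the spectral theorem for `AᵀA`: the trace of its `k`-th power is the sum of the
`k`-th powers of its eigenvalues, and these eigenvalues are the squared singular values.

For part two write `p = 2q + 4`. Moving `Eᵀ A` to the front under the trace and using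
`A (AᵀA)^q = (AAᵀ)^q A`, the trace becomes `Tr(Eᵀ C E)` with `C = (AAᵀ)^(q+1)`. Column by column,
`⟪e, C e⟫ ≤ ‖C‖ ‖e‖²` by Cauchy–Schwarz, so `Tr(Eᵀ C E) ≤ ‖C‖ ‖E‖_F²`, and
`‖C‖ ≤ ‖AAᵀ‖^(q+1) = ‖A‖^(p-2)`.
-/

open Matrix

/-- The spectral (ℓ_2 operator, Schatten ∞) norm of a real matrix. -/
noncomputable def specNorm {m n : Type*} [Fintype m] [Fintype n] [DecidableEq n]
    (A : Matrix m n ℝ) : ℝ :=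
  ‖(Matrix.toEuclideanLin A).toContinuousLinearMap‖

/-- The Frobenius norm of a real matrix. -/
noncomputable def frobNorm {m n : Type*} [Fintype m] [Fintype n] (A : Matrix m n ℝ) : ℝ :=
  Real.sqrt (∑ i, ∑ j, (A i j) ^ 2)

/-- The i-th singular value of A: the square root of the i-th eigenvalue of AᵀA. -/
noncomputable def singVal {m n : ℕ} (A : Matrix (Fin m) (Fin n) ℝ) (i : Fin n) : ℝ :=
  Real.sqrt ((Matrix.isHermitian_conjTranspose_mul_self A).eigenvalues i)

open scoped Matrix.Norms.L2Operator

namespace Matrix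

theorem IsHermitian.trace_pow {𝕜 n : Type*} [RCLike 𝕜] [Fintype n] [DecidableEq n]
    {A : Matrix n n 𝕜} (hA : A.IsHermitian) (k : ℕ) :
    (A ^ k).trace = ∑ i, (hA.eigenvalues i : 𝕜) ^ k := by
  rw [← cfc_pow_id (R := ℝ) A k hA.isSelfAdjoint, hA.cfc_eq, IsHermitian.cfc,
    Unitary.conjStarAlgAut_apply, trace_mul_cycle, Unitary.coe_star_mul_self, one_mul,
    trace_diagonal]
  simp

section Transpose

variable {α m n : Type*} [Fintype m] [Fintype n]

theorem mul_pow_transpose_mul_self [Semiring α] [DecidableEq m] [DecidableEq n]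
    (A : Matrix m n α) (q : ℕ) : A * (Aᵀ * A) ^ q = (A * Aᵀ) ^ q * A := by
  induction q with
  | zero => simp
  | succ q ih => simp only [pow_succ, ← Matrix.mul_assoc, ih]

theorem trace_transpose_mul_mul [CommSemiring α] (C : Matrix m m α) (E : Matrix m n α) :
    (Eᵀ * C * E).trace = ∑ j, Eᵀ j ⬝ᵥ (C *ᵥ Eᵀ j) := by
  rw [Matrix.mul_assoc]
  rfl

theorem trace_pow_transpose_mul_self_mul [CommSemiring α] [DecidableEq m] [DecidableEq n]
    (A E : Matrix m n α) (q : ℕ) :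
    ((Aᵀ * A) ^ q * Aᵀ * E * Eᵀ * A).trace = (Eᵀ * (A * Aᵀ) ^ (q + 1) * E).trace := by
  calc ((Aᵀ * A) ^ q * Aᵀ * E * Eᵀ * A).trace
      = ((Aᵀ * A) ^ q * Aᵀ * E * (Eᵀ * A)).trace := by simp only [Matrix.mul_assoc]
    _ = (Eᵀ * (A * (Aᵀ * A) ^ q) * Aᵀ * E).trace := by
        rw [trace_mul_comm]; simp only [Matrix.mul_assoc]
    _ = (Eᵀ * (A * Aᵀ) ^ (q + 1) * E).trace := by
        rw [mul_pow_transpose_mul_self, pow_succ]; simp only [Matrix.mul_assoc]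

end Transpose

section L2OpNorm

variable {m n : Type*} [Fintype m] [Fintype n] [DecidableEq m] [DecidableEq n]

theorem l2_opNorm_mul_transpose_self (A : Matrix m n ℝ) : ‖A * Aᵀ‖ = ‖A‖ * ‖A‖ := by
  rw [← conjTranspose_eq_transpose_of_trivial]
  simpa only [conjTranspose_conjTranspose, l2_opNorm_conjTranspose] using
    l2_opNorm_conjTranspose_mul_self Aᴴ

theorem l2_opNorm_mul_transpose_self_pow_le (A : Matrix m n ℝ) {k : ℕ} (hk : 0 < k) :
    ‖(A * Aᵀ) ^ k‖ ≤ ‖A‖ ^ (2 * k) :=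
  calc ‖(A * Aᵀ) ^ k‖ ≤ ‖A * Aᵀ‖ ^ k := norm_pow_le' _ hk
    _ = ‖A‖ ^ (2 * k) := by rw [l2_opNorm_mul_transpose_self, ← sq, pow_mul]

theorem dotProduct_mulVec_le (C : Matrix m m ℝ) (x : m → ℝ) :
    x ⬝ᵥ (C *ᵥ x) ≤ ‖C‖ * ∑ i, x i ^ 2 := by
  have hx : ‖WithLp.toLp 2 x‖ ^ 2 = ∑ i, x i ^ 2 := by simp [EuclideanSpace.norm_sq_eq]
  calc x ⬝ᵥ (C *ᵥ x) = inner ℝ (WithLp.toLp 2 x) (WithLp.toLp 2 (C *ᵥ x)) := by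
        rw [EuclideanSpace.inner_toLp_toLp, star_trivial, dotProduct_comm]
    _ ≤ ‖WithLp.toLp 2 x‖ * ‖WithLp.toLp 2 (C *ᵥ x)‖ := real_inner_le_norm _ _
    _ ≤ ‖WithLp.toLp 2 x‖ * (‖C‖ * ‖WithLp.toLp 2 x‖) := by
        gcongr; exact l2_opNorm_mulVec C _
    _ = ‖C‖ * ∑ i, x i ^ 2 := by rw [← hx]; ring

end L2OpNorm

end Matrix

theorem specNorm_eq_l2_opNorm {m n : Type*} [Fintype m] [Fintype n] [DecidableEq n]
    (A : Matrix m n ℝ) : specNorm A = ‖A‖ :=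
  rfl

theorem frobNorm_sq {m n : Type*} [Fintype m] [Fintype n] (E : Matrix m n ℝ) :
    frobNorm E ^ 2 = ∑ i, ∑ j, E i j ^ 2 :=
  Real.sq_sqrt (by positivity)

theorem trace_transpose_mul_mul_le {m n : Type*} [Fintype m] [Fintype n] [DecidableEq m]
    (C : Matrix m m ℝ) (E : Matrix m n ℝ) :
    (Eᵀ * C * E).trace ≤ ‖C‖ * frobNorm E ^ 2 := by
  rw [Matrix.trace_transpose_mul_mul, frobNorm_sq, Finset.sum_comm, Finset.mul_sum]
  exact Finset.sum_le_sum fun j _ => Matrix.dotProduct_mulVec_le C (Eᵀ j)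

/-- for even p ≥ 4, the Schatten p-norm satisfies
    ‖A‖_{S_p}^p = Tr((AᵀA)^{p/2}), and
    Tr((AᵀA)^{p/2−2} AᵀEEᵀA) ≤ ‖A‖_{S_∞}^{p−2} ‖E‖_F². -/
theorem stmt_18 (p : ℕ) (hp : 4 ≤ p) (hpeven : Even p)
    (m n : ℕ) (A E : Matrix (Fin m) (Fin n) ℝ) :
    (∑ i, singVal A i ^ p) = Matrix.trace ((Aᵀ * A) ^ (p / 2)) ∧
      Matrix.trace ((Aᵀ * A) ^ (p / 2 - 2) * Aᵀ * E * Eᵀ * A) ≤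
        specNorm A ^ (p - 2) * frobNorm E ^ 2 := by
  have hAA := isHermitian_conjTranspose_mul_self A
  obtain ⟨k, rfl⟩ := hpeven
  constructor
  · have htrace : ((Aᵀ * A) ^ k).trace = ∑ i, hAA.eigenvalues i ^ k := hAA.trace_pow k
    rw [show (k + k) / 2 = k by omega, htrace]
    refine Finset.sum_congr rfl fun i _ => ?_
    rw [singVal, ← two_mul, pow_mul, Real.sq_sqrt (eigenvalues_conjTranspose_mul_self_nonneg A i)]
  · obtain ⟨q, rfl⟩ : ∃ q, k = q + 2 := ⟨k - 2, by omega⟩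
    rw [show (q + 2 + (q + 2)) / 2 - 2 = q by omega, show q + 2 + (q + 2) - 2 = 2 * (q + 1) by omega,
      trace_pow_transpose_mul_self_mul, specNorm_eq_l2_opNorm]
    calc (Eᵀ * (A * Aᵀ) ^ (q + 1) * E).trace ≤ ‖(A * Aᵀ) ^ (q + 1)‖ * frobNorm E ^ 2 :=
          trace_transpose_mul_mul_le _ _
      _ ≤ ‖A‖ ^ (2 * (q + 1)) * frobNorm E ^ 2 := by
          gcongr; exact l2_opNorm_mul_transpose_self_pow_le A q.succ_pos
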